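/- arXiv:1003.2172 — 5 statements merged into one kernel-verified Lean document; each statement's English description precedes it below -/
import Mathlib

section
/- If H has simple eigenvalues and L is a Lindblad generator with jump operators Γ_j such that L(P_a) = 0 for every spectral projection P_a of H, then each Γ_j commutes with H. (Necessity of [Γ_j,H]=0 for dephasing, via expanding tr(P_a L(P_a)) = 0.) -/
open Matrix

private lemma trace_mul_conjTranspose_eq {N : ℕ} (A : Matrix (Fin N) (Fin N) ℂ) :
    Matrix.trace (A * Aᴴ) = ((∑ i, ∑ k, Complex.normSq (A i k) : ℝ) : ℂ) := by
  simp only [Matrix.trace, Matrix.diag, Matrix.mul_apply, Matrix.conjTranspose_apply]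
  push_cast
  congr 1
  ext i
  congr 1
  ext k
  rw [← Complex.mul_conj]
  rfl

private lemma eq_zero_of_trace_mul_conjTranspose {N : ℕ} (A : Matrix (Fin N) (Fin N) ℂ)
    (h : Matrix.trace (A * Aᴴ) = 0) : A = 0 := by
  rw [trace_mul_conjTranspose_eq] at h
  have h' : (∑ i, ∑ k, Complex.normSq (A i k) : ℝ) = 0 := by exact_mod_cast h
  ext i k
  have hnn : ∀ i ∈ Finset.univ, (0:ℝ) ≤ ∑ k, Complex.normSq (A i k) :=
    fun i _ => Finset.sum_nonneg fun k _ => Complex.normSq_nonneg _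
  have h1 := (Finset.sum_eq_zero_iff_of_nonneg hnn).mp h' i (Finset.mem_univ i)
  have h2 := (Finset.sum_eq_zero_iff_of_nonneg
    (fun k _ => Complex.normSq_nonneg (A i k))).mp h1 k (Finset.mem_univ k)
  simpa [Complex.normSq_eq_zero] using h2

/-- If `H` has simple eigenvalues (rank-one spectral projections) and the Lindblad
generator `L` with jump operators `Γ_j` annihilates every spectral projection `P_a` of `H`,
then each `Γ_j` commutes with `H`. -/
theorem lindbladian_stationary_projections_implies_commute {N M : ℕ}
    (e : Fin N → ℝ) (he : Function.Injective e)
    (P : Fin N → Matrix (Fin N) (Fin N) ℂ)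
    (hherm : ∀ a, (P a).IsHermitian)
    (hproj : ∀ a, P a * P a = P a)
    (horth : ∀ a b, a ≠ b → P a * P b = 0)
    (hrank : ∀ a, (P a).rank = 1)
    (hsum : ∑ a, P a = 1)
    (H : Matrix (Fin N) (Fin N) ℂ) (hH : H = ∑ a, (e a : ℂ) • P a)
    (Γ : Fin M → Matrix (Fin N) (Fin N) ℂ)
    (L : Matrix (Fin N) (Fin N) ℂ → Matrix (Fin N) (Fin N) ℂ)
    (hL : ∀ ρ, L ρ = -Complex.I • (H * ρ - ρ * H) +
      ∑ j, ((2 : ℂ) • (Γ j * ρ * (Γ j)ᴴ) - (Γ j)ᴴ * Γ j * ρ - ρ * ((Γ j)ᴴ * Γ j)))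
    (hstat : ∀ a, L (P a) = 0) :
    ∀ j, Γ j * H = H * Γ j := by
  have hHP : ∀ a, H * P a = (e a : ℂ) • P a := by
    intro a
    rw [hH, Finset.sum_mul, Finset.sum_eq_single a]
    · rw [smul_mul_assoc, hproj]
    · intro b _ hb
      rw [smul_mul_assoc, horth b a hb, smul_zero]
    · simp
  have hPH : ∀ a, P a * H = (e a : ℂ) • P a := by
    intro a
    rw [hH, Finset.mul_sum, Finset.sum_eq_single a]
    · rw [mul_smul_comm, hproj]
    · intro b _ hb
      rw [mul_smul_comm, horth a b (Ne.symm hb), smul_zero]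
    · simp
  -- key: P b * Γ j * P a = 0 for a ≠ b
  have key : ∀ (a b : Fin N), a ≠ b → ∀ j, P b * Γ j * P a = 0 := by
    intro a b hab
    have hLa := hstat a
    rw [hL, hHP a, hPH a, sub_self, smul_zero, zero_add] at hLa
    have h2 : P b * (∑ j, ((2 : ℂ) • (Γ j * P a * (Γ j)ᴴ) - (Γ j)ᴴ * Γ j * P a
        - P a * ((Γ j)ᴴ * Γ j))) * P b = 0 := by rw [hLa]; simp
    set A : Fin M → Matrix (Fin N) (Fin N) ℂ := fun j => P b * Γ j * P a with hA
    have hAA : ∀ j, A j * (A j)ᴴ = P b * (Γ j * P a * (Γ j)ᴴ) * P b := by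
      intro j
      have : (A j)ᴴ = P a * ((Γ j)ᴴ * P b) := by
        simp [hA, Matrix.conjTranspose_mul, (hherm a).eq, (hherm b).eq, mul_assoc]
      rw [this, hA]
      calc P b * Γ j * P a * (P a * ((Γ j)ᴴ * P b))
          = P b * Γ j * (P a * P a) * ((Γ j)ᴴ * P b) := by
            simp only [mul_assoc]
        _ = P b * (Γ j * P a * (Γ j)ᴴ) * P b := by
            rw [hproj]; simp only [mul_assoc]
    have h3 : ∑ j, (2 : ℂ) • (A j * (A j)ᴴ) = 0 := by
      rw [← h2, Finset.mul_sum, Finset.sum_mul]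
      apply Finset.sum_congr rfl
      intro j _
      have hab' : P a * P b = 0 := horth a b hab
      have hba : P b * P a = 0 := horth b a (Ne.symm hab)
      have e1 : P b * ((Γ j)ᴴ * Γ j * P a) * P b = 0 := by
        rw [mul_assoc, mul_assoc, hab', mul_zero, mul_zero]
      have e2 : P b * (P a * ((Γ j)ᴴ * Γ j)) * P b = 0 := by
        rw [← mul_assoc, hba, zero_mul, zero_mul]
      rw [mul_sub, mul_sub, sub_mul, sub_mul, e1, e2, sub_zero, sub_zero, hAA,
        mul_smul_comm, smul_mul_assoc]
    have htr : ∑ j, ((∑ i, ∑ k, Complex.normSq (A j i k) : ℝ) : ℂ) = 0 := by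
      have := congrArg Matrix.trace h3
      rw [Matrix.trace_sum, Matrix.trace_zero] at this
      simp only [Matrix.trace_smul, trace_mul_conjTranspose_eq] at this
      have h2ne : (2:ℂ) ≠ 0 := two_ne_zero
      calc ∑ j, ((∑ i, ∑ k, Complex.normSq (A j i k) : ℝ) : ℂ)
          = (2:ℂ)⁻¹ * ∑ j, (2:ℂ) • ((∑ i, ∑ k, Complex.normSq (A j i k) : ℝ) : ℂ) := by
            rw [Finset.mul_sum]
            apply Finset.sum_congr rfl
            intro j _
            rw [smul_eq_mul, ← mul_assoc, inv_mul_cancel₀ h2ne, one_mul]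
        _ = 0 := by rw [this, mul_zero]
    have htr' : (∑ j, ∑ i, ∑ k, Complex.normSq (A j i k) : ℝ) = 0 := by
      exact_mod_cast htr
    intro j
    have hnn : ∀ j ∈ Finset.univ, (0:ℝ) ≤ ∑ i, ∑ k, Complex.normSq (A j i k) :=
      fun j _ => Finset.sum_nonneg fun i _ =>
        Finset.sum_nonneg fun k _ => Complex.normSq_nonneg _
    have hj := (Finset.sum_eq_zero_iff_of_nonneg hnn).mp htr' j (Finset.mem_univ j)
    apply eq_zero_of_trace_mul_conjTranspose
    rw [trace_mul_conjTranspose_eq, hj]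
    norm_num
  -- decompose Γ j
  intro j
  have hdec : Γ j = ∑ a, P a * Γ j * P a := by
    calc Γ j = (∑ b, P b) * Γ j * (∑ a, P a) := by rw [hsum]; simp
      _ = ∑ a, ∑ b, P b * Γ j * P a := by
          simp only [Finset.sum_mul, Finset.mul_sum]
      _ = ∑ a, P a * Γ j * P a := by
          apply Finset.sum_congr rfl
          intro a _
          exact Finset.sum_eq_single_of_mem a (Finset.mem_univ a)
            (fun b _ hb => key a b (Ne.symm hb) j)
  have h1 : Γ j * H = ∑ a, (e a : ℂ) • (P a * Γ j * P a) := by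
    conv_lhs => rw [hdec]
    rw [Finset.sum_mul]
    apply Finset.sum_congr rfl
    intro a _
    rw [mul_assoc (P a * Γ j) (P a) H, hPH a, mul_smul_comm]
  have h2 : H * Γ j = ∑ a, (e a : ℂ) • (P a * Γ j * P a) := by
    conv_lhs => rw [hdec]
    rw [Finset.mul_sum]
    apply Finset.sum_congr rfl
    intro a _
    rw [← mul_assoc, ← mul_assoc, hHP a, smul_mul_assoc, smul_mul_assoc]
  rw [h1, h2]
end

section
/- With L* as the adjoint of the dephasing Lindbladian L(ρ) = -i[H,ρ] - γ ∑_{j≠k} P_j ρ P_k (H having distinct eigenvalues e_a, spectral projections P_a, γ > 0), the matrix X = ∑_{a≠b} P_a P_0' P_b / (i(e_a - e_b) - γ) satisfies L*(X) = P_0', where P_0' is the derivative of the smooth family of ground-state projections P_0(q). -/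
open Matrix

/-- With `L*` the Hilbert–Schmidt adjoint of the dephasing Lindbladian
`L(ρ) = -i[H,ρ] - γ ∑_{j≠k} P_j ρ P_k`, the matrix
`X = ∑_{a≠b} P_a P_0' P_b / (i(e_a - e_b) - γ)` satisfies `L*(X) = P_0'`,
where `P_0'` (the derivative of the ground-state projection) is off-diagonal. -/
theorem dephasing_adjoint_solves_offdiagonal {N : ℕ}
    (e : Fin N → ℝ) (he : Function.Injective e)
    (P : Fin N → Matrix (Fin N) (Fin N) ℂ)
    (hherm : ∀ a, (P a).IsHermitian)
    (hproj : ∀ a, P a * P a = P a)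
    (horth : ∀ a b, a ≠ b → P a * P b = 0)
    (hsum : ∑ a, P a = 1)
    (H : Matrix (Fin N) (Fin N) ℂ) (hH : H = ∑ a, (e a : ℂ) • P a)
    (γ : ℝ) (hγ : 0 < γ)
    (Lstar : Matrix (Fin N) (Fin N) ℂ → Matrix (Fin N) (Fin N) ℂ)
    (hLstar : ∀ Y, Lstar Y = Complex.I • (H * Y - Y * H) -
      (γ : ℂ) • ∑ j, ∑ k, if j ≠ k then P j * Y * P k else 0)
    (P0' : Matrix (Fin N) (Fin N) ℂ)
    (hoff : P0' = ∑ a, ∑ b, if a ≠ b then P a * P0' * P b else 0)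
    (X : Matrix (Fin N) (Fin N) ℂ)
    (hX : X = ∑ a, ∑ b, if a ≠ b then
      (Complex.I * ((e a : ℂ) - (e b : ℂ)) - (γ : ℂ))⁻¹ • (P a * P0' * P b) else 0) :
    Lstar X = P0' := by
  set c : Fin N → Fin N → ℂ := fun a b => Complex.I * ((e a : ℂ) - (e b : ℂ)) - (γ : ℂ) with hcdef
  have hc : ∀ a b : Fin N, c a b ≠ 0 := by
    intro a b h
    have hre := congrArg Complex.re h
    simp [hcdef, Complex.sub_re, Complex.mul_re] at hre
    exact (ne_of_gt hγ) hre
  have hPQ : ∀ j a b : Fin N, P j * (P a * P0' * P b) =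
      if j = a then P a * P0' * P b else 0 := by
    intro j a b
    by_cases h : j = a
    · subst h; simp [← mul_assoc, hproj]
    · simp [← mul_assoc, horth j a h, h]
  have hQP : ∀ k a b : Fin N, (P a * P0' * P b) * P k =
      if k = b then P a * P0' * P b else 0 := by
    intro k a b
    by_cases h : k = b
    · subst h; simp [mul_assoc, hproj]
    · simp [mul_assoc, horth b k (Ne.symm h), h]
  have hHQ : ∀ a b : Fin N, H * (P a * P0' * P b) = (e a : ℂ) • (P a * P0' * P b) := by
    intro a b
    rw [hH, Finset.sum_mul]
    have : ∀ d ∈ Finset.univ, ((e d : ℂ) • P d) * (P a * P0' * P b)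
        = if d = a then (e a : ℂ) • (P a * P0' * P b) else 0 := by
      intro d _
      rw [smul_mul_assoc, hPQ d a b]
      by_cases h : d = a <;> simp [h]
    rw [Finset.sum_congr rfl this, Finset.sum_ite_eq' Finset.univ a]
    simp
  have hQH : ∀ a b : Fin N, (P a * P0' * P b) * H = (e b : ℂ) • (P a * P0' * P b) := by
    intro a b
    rw [hH, Finset.mul_sum]
    have : ∀ d ∈ Finset.univ, (P a * P0' * P b) * ((e d : ℂ) • P d)
        = if d = b then (e b : ℂ) • (P a * P0' * P b) else 0 := by
      intro d _
      rw [mul_smul_comm, hQP d a b]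
      by_cases h : d = b <;> simp [h]
    rw [Finset.sum_congr rfl this, Finset.sum_ite_eq' Finset.univ b]
    simp
  have hHX : H * X = ∑ a, ∑ b, if a ≠ b then ((c a b)⁻¹ * (e a : ℂ)) • (P a * P0' * P b) else 0 := by
    rw [hX, Finset.mul_sum]
    refine Finset.sum_congr rfl fun a _ => ?_
    rw [Finset.mul_sum]
    refine Finset.sum_congr rfl fun b _ => ?_
    by_cases hab : a ≠ b
    · rw [if_pos hab, if_pos hab, mul_smul_comm, hHQ a b, smul_smul]
    · simp [hab]
  have hXH : X * H = ∑ a, ∑ b, if a ≠ b then ((c a b)⁻¹ * (e b : ℂ)) • (P a * P0' * P b) else 0 := by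
    rw [hX, Finset.sum_mul]
    refine Finset.sum_congr rfl fun a _ => ?_
    rw [Finset.sum_mul]
    refine Finset.sum_congr rfl fun b _ => ?_
    by_cases hab : a ≠ b
    · rw [if_pos hab, if_pos hab, smul_mul_assoc, hQH a b, smul_smul]
    · simp [hab]
  have hPXP : ∀ j k : Fin N, j ≠ k → P j * X * P k = (c j k)⁻¹ • (P j * P0' * P k) := by
    intro j k hjk
    rw [hX, Finset.mul_sum, Finset.sum_mul]
    rw [Finset.sum_eq_single j (fun a _ haj => ?_) (by simp)]
    · rw [Finset.mul_sum, Finset.sum_mul]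
      rw [Finset.sum_eq_single k (fun b _ hbk => ?_) (by simp)]
      · rw [if_pos hjk, mul_smul_comm, smul_mul_assoc, hPQ j j k, if_pos rfl,
          hQP k j k, if_pos rfl]
      · by_cases hjb : j ≠ b
        · rw [if_pos hjb, mul_smul_comm, smul_mul_assoc, hPQ j j b, if_pos rfl,
            hQP k j b, if_neg (fun h => hbk h.symm), smul_zero]
        · simp [hjb]
    · rw [Finset.mul_sum, Finset.sum_mul]
      refine Finset.sum_eq_zero fun b _ => ?_
      by_cases hab : a ≠ b
      · rw [if_pos hab, mul_smul_comm, smul_mul_assoc, hPQ j a b,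
          if_neg (fun h => haj h.symm), zero_mul, smul_zero]
      · simp [hab]
  have hS : (∑ j, ∑ k, if j ≠ k then P j * X * P k else 0)
      = ∑ a, ∑ b, if a ≠ b then (c a b)⁻¹ • (P a * P0' * P b) else 0 := by
    refine Finset.sum_congr rfl fun j _ => Finset.sum_congr rfl fun k _ => ?_
    by_cases h : j ≠ k <;> simp [h, hPXP]
  rw [hLstar X, hHX, hXH, hS]
  conv_rhs => rw [hoff]
  simp only [← Finset.sum_sub_distrib, Finset.smul_sum]
  refine Finset.sum_congr rfl fun a _ => Finset.sum_congr rfl fun b _ => ?_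
  by_cases hab : a ≠ b
  · rw [if_pos hab, if_pos hab, if_pos hab, if_pos hab]
    have hco : Complex.I • (((c a b)⁻¹ * (e a : ℂ)) • (P a * P0' * P b)
          - ((c a b)⁻¹ * (e b : ℂ)) • (P a * P0' * P b))
        - (γ : ℂ) • ((c a b)⁻¹ • (P a * P0' * P b))
        = (Complex.I * ((c a b)⁻¹ * (e a : ℂ)) - Complex.I * ((c a b)⁻¹ * (e b : ℂ))
            - (γ : ℂ) * (c a b)⁻¹) • (P a * P0' * P b) := by
      module
    have h1 : Complex.I * ((c a b)⁻¹ * (e a : ℂ)) - Complex.I * ((c a b)⁻¹ * (e b : ℂ))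
        - (γ : ℂ) * (c a b)⁻¹ = (c a b)⁻¹ * (c a b) := by
      simp only [hcdef]; ring
    rw [hco, h1, inv_mul_cancel₀ (hc a b), one_smul]
  · simp [hab]
end

section
/- For a 2-level Hamiltonian 2H(q) = g(q)·σ with g : [0,1] → R^3 smooth and |g(q)| ≥ g_0 > 0, the mass M(q) = ∑_{a≠0} γ tr(P_a (P_0')^2)/((e_0 - e_a)^2 + γ^2) equals (γ/4) |ĝ'(q)|^2 / (g(q)^2 + γ^2), where ĝ = g/|g|, g(q) = |g(q)|, and the eigenvalues are ±g(q)/2. -/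
open Matrix

attribute [local instance] Matrix.normedAddCommGroup Matrix.normedSpace

/-- `v ⬝ σ` for the vector of Pauli matrices `σ = (σ_x, σ_y, σ_z)`. -/
noncomputable def pauliDot (v : Fin 3 → ℝ) : Matrix (Fin 2) (Fin 2) ℂ :=
  !![(v 2 : ℂ), (v 0 : ℂ) - (v 1 : ℂ) * Complex.I;
     (v 0 : ℂ) + (v 1 : ℂ) * Complex.I, -(v 2 : ℂ)]

/-!
Since `(v ⬝ σ)² = |v|² I` and `v ⬝ σ` is traceless, `tr (P₊ (P₋')²) = |n'|²/4 · tr P₊ = |n'|²/4`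
for `P₋' = -(n' ⬝ σ)/2`; the mass formula is this identity divided by
`(e₀ - e₊)² + γ² = g² + γ²`.
-/

theorem pauliDot_mul_self (v : Fin 3 → ℝ) :
    pauliDot v * pauliDot v = ((∑ i, v i ^ 2 : ℝ) : ℂ) • 1 := by
  ext i j
  fin_cases i <;> fin_cases j <;>
    simp [pauliDot, Matrix.mul_apply, Fin.sum_univ_succ] <;> ring_nf <;> simp [Complex.I_sq]

theorem trace_pauliDot (v : Fin 3 → ℝ) : trace (pauliDot v) = 0 := by
  simp [pauliDot, trace_fin_two]

theorem re_trace_projection_mul_sq (a b : Fin 3 → ℝ) :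
    (trace ((2 : ℂ)⁻¹ • (1 + pauliDot a) * ((2 : ℂ)⁻¹ • -pauliDot b) *
      ((2 : ℂ)⁻¹ • -pauliDot b))).re = (∑ i, b i ^ 2) / 4 := by
  have hmul : (2 : ℂ)⁻¹ • (1 + pauliDot a) * ((2 : ℂ)⁻¹ • -pauliDot b) *
      ((2 : ℂ)⁻¹ • -pauliDot b) = (((∑ i, b i ^ 2 : ℝ) : ℂ) / 8) • (1 + pauliDot a) := by
    rw [mul_assoc, smul_mul_smul_comm, neg_mul_neg, pauliDot_mul_self, smul_mul_smul_comm,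
      mul_smul_comm, mul_one, smul_smul]
    congr 1
    ring
  rw [hmul, trace_smul, trace_add, trace_pauliDot, trace_one]
  generalize ∑ i, b i ^ 2 = s
  simp
  ring

noncomputable def pauliDotCLM : (Fin 3 → ℝ) →L[ℝ] Matrix (Fin 2) (Fin 2) ℂ :=
  LinearMap.toContinuousLinearMap
    { toFun := pauliDot
      map_add' := fun u v => by
        ext i j
        fin_cases i <;> fin_cases j <;> simp [pauliDot] <;> ring
      map_smul' := fun c v => by
        ext i j
        fin_cases i <;> fin_cases j <;> simp [pauliDot, Complex.real_smul] <;> ring }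

theorem HasDerivAt.pauliDot {n : ℝ → Fin 3 → ℝ} {n' : Fin 3 → ℝ} {q : ℝ}
    (hn : HasDerivAt n n' q) :
    HasDerivAt (fun t => pauliDot (n t)) (pauliDot n') q :=
  pauliDotCLM.hasFDerivAt.comp_hasDerivAt q hn

theorem hasDerivAt_lowerProjection {n : ℝ → Fin 3 → ℝ} {n' : Fin 3 → ℝ} {q : ℝ}
    (hn : HasDerivAt n n' q) :
    HasDerivAt (fun t => (2 : ℂ)⁻¹ • (1 - pauliDot (n t))) ((2 : ℂ)⁻¹ • -pauliDot n') q := by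
  have h := ((hasDerivAt_const q (1 : Matrix (Fin 2) (Fin 2) ℂ)).sub hn.pauliDot).const_smul
    (2 : ℂ)⁻¹
  rwa [zero_sub] at h

theorem mass_two_level_general
    (gnorm : ℝ → ℝ)
    (n : ℝ → Fin 3 → ℝ)
    (n' : ℝ → Fin 3 → ℝ) (hn' : ∀ q i, HasDerivAt (fun t => n t i) (n' q i) q)
    (Pminus Pplus : ℝ → Matrix (Fin 2) (Fin 2) ℂ)
    (hPm : ∀ q, Pminus q = (2 : ℂ)⁻¹ • (1 - pauliDot (n q)))
    (hPp : ∀ q, Pplus q = (2 : ℂ)⁻¹ • (1 + pauliDot (n q)))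
    (Pm' : ℝ → Matrix (Fin 2) (Fin 2) ℂ)
    (hPm' : ∀ q, HasDerivAt Pminus (Pm' q) q)
    (γ : ℝ)
    (Mass : ℝ → ℝ)
    (hMass : ∀ q, Mass q =
      γ * (Matrix.trace (Pplus q * Pm' q * Pm' q)).re / ((-(gnorm q / 2) - gnorm q / 2) ^ 2 + γ ^ 2)) :
    ∀ q, Mass q = γ / 4 * (∑ i, n' q i ^ 2) / (gnorm q ^ 2 + γ ^ 2) := by
  intro q
  have hPm'_eq : Pm' q = (2 : ℂ)⁻¹ • -pauliDot (n' q) := by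
    rw [show Pminus = _ from funext hPm] at hPm'
    exact (hPm' q).unique (hasDerivAt_lowerProjection (hasDerivAt_pi.2 (hn' q)))
  rw [hMass q, hPp q, hPm'_eq, re_trace_projection_mul_sq]
  ring

/-- For a 2-level Hamiltonian `2H(q) = g(q)·σ` with `|g(q)| ≥ g₀ > 0`, eigenvalues
`±g(q)/2` and spectral projections `P_± = (I ± ĝ·σ)/2`, the mass
`M(q) = ∑_{a≠0} γ tr(P_a (P_0')²)/((e_0-e_a)² + γ²)` (here the single term `a = +`, with
`(e_0 - e_a)² = g(q)²`) equals `(γ/4) |ĝ'(q)|² / (g(q)² + γ²)`. -/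
theorem mass_two_level
    (g : ℝ → Fin 3 → ℝ) (g0 : ℝ) (hg0 : 0 < g0)
    (gnorm : ℝ → ℝ) (hgnorm : ∀ q, gnorm q = Real.sqrt (∑ i, g q i ^ 2))
    (hgap : ∀ q, g0 ≤ gnorm q)
    (n : ℝ → Fin 3 → ℝ) (hn : ∀ q, n q = (gnorm q)⁻¹ • g q)
    (n' : ℝ → Fin 3 → ℝ) (hn' : ∀ q i, HasDerivAt (fun t => n t i) (n' q i) q)
    (Pminus Pplus : ℝ → Matrix (Fin 2) (Fin 2) ℂ)
    (hPm : ∀ q, Pminus q = (2 : ℂ)⁻¹ • (1 - pauliDot (n q)))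
    (hPp : ∀ q, Pplus q = (2 : ℂ)⁻¹ • (1 + pauliDot (n q)))
    (Pm' : ℝ → Matrix (Fin 2) (Fin 2) ℂ)
    (hPm' : ∀ q, HasDerivAt Pminus (Pm' q) q)
    (γ : ℝ) (hγ : 0 < γ)
    (Mass : ℝ → ℝ)
    (hMass : ∀ q, Mass q =
      γ * (Matrix.trace (Pplus q * Pm' q * Pm' q)).re / ((-(gnorm q / 2) - gnorm q / 2) ^ 2 + γ ^ 2)) :
    ∀ q, Mass q = γ / 4 * (∑ i, n' q i ^ 2) / (gnorm q ^ 2 + γ ^ 2) :=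
  mass_two_level_general gnorm n n' hn' Pminus Pplus hPm hPp Pm' hPm' γ Mass hMass
end

section
/- Let 2H(q) = g(q)·σ be a 2-level Hamiltonian with |g(q)| ≥ g_0 > 0 for all q ∈ [q_-, q_+]. If the continuous path ĝ(q), q ∈ [q_-, q_+], intersects the plane through the origin orthogonal to ĝ(q_+) - ĝ(q_-) shifted to pass through (ĝ(q_+)+ĝ(q_-))/2, at some point ĝ(q*), then the rotation of the Bloch sphere about the axis ĝ(q*) by a suitable angle maps ĝ(q_-) to ĝ(q_+); equivalently, there exists τ ≤ 2π/|g(q*)| such that e^{-i H(q*) τ} maps the eigenprojection P_-(q_-) to P_-(q_+) by conjugation. -/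
open Matrix

/-!
Conjugating `σ·a` by `exp(-i φ σ·u)`, for a unit vector `u`, gives `σ·(R a)` where `R` is the
rotation about `u` by the angle `2φ` (Rodrigues' formula). A rotation about a unit vector `u` maps
a unit vector `a` to a unit vector `b` whenever `u·a = u·b`: the components of `a` and `b`
orthogonal to `u` then have the same length, so they differ by a rotation of the plane `u^⊥`.
Since `H(q*) = (|g(q*)|/2) σ·ĝ(q*)`, a rotation angle `θ ∈ [0, 2π]` is reached at the time
`τ = θ / |g(q*)|`.
-/

open Real Set

theorem dotProduct_self_inv_sqrt_smul {ι : Type*} [Fintype ι] {v : ι → ℝ}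
    (hv : 0 < √(∑ i, v i ^ 2)) :
    ((√(∑ i, v i ^ 2))⁻¹ • v) ⬝ᵥ ((√(∑ i, v i ^ 2))⁻¹ • v) = 1 := by
  have hsq : v ⬝ᵥ v = (√(∑ i, v i ^ 2)) ^ 2 := by
    rw [sq_sqrt (by positivity)]; simp [dotProduct, sq]
  rw [dotProduct_smul, smul_dotProduct, hsq, smul_eq_mul, smul_eq_mul]
  field_simp

noncomputable def rodriguesRotation (u : Fin 3 → ℝ) (θ : ℝ) (a : Fin 3 → ℝ) : Fin 3 → ℝ :=
  cos θ • a + sin θ • (u ⨯₃ a) + ((1 - cos θ) * (u ⬝ᵥ a)) • u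

theorem exists_mem_Icc_cos_sin_eq {c s : ℝ} (h : c ^ 2 + s ^ 2 = 1) :
    ∃ θ ∈ Icc 0 (2 * π), cos θ = c ∧ sin θ = s := by
  -- `arg` takes values in `(-π, π]`, so `arg (-(c + s i)) + π` lies in `[0, 2π]`.
  set z : ℂ := ⟨-c, -s⟩
  have hz : ‖z‖ = 1 := by
    rw [Complex.norm_def, Complex.normSq_mk, show -c * -c + -s * -s = 1 by linear_combination h,
      sqrt_one]
  refine ⟨z.arg + π, ⟨by linarith [z.neg_pi_lt_arg], by linarith [z.arg_le_pi]⟩, ?_, ?_⟩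
  · rw [cos_add_pi, Complex.cos_arg (norm_ne_zero_iff.mp (hz ▸ one_ne_zero)), hz]; simp [z]
  · rw [sin_add_pi, Complex.sin_arg, hz]; simp [z]

section Rotation

variable {u : Fin 3 → ℝ}

/-- `y` and `u ⨯₃ y` form an orthogonal basis of the plane `u^⊥`, both of length `‖y‖`. -/
theorem dotProduct_self_smul_eq_of_dotProduct_eq_zero (hu : u ⬝ᵥ u = 1) {x y : Fin 3 → ℝ}
    (hx : u ⬝ᵥ x = 0) (hy : u ⬝ᵥ y = 0) :
    (y ⬝ᵥ y) • x = (y ⬝ᵥ x) • y + ((u ⨯₃ y) ⬝ᵥ x) • (u ⨯₃ y) := by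
  set w := u ⨯₃ y
  have hww : w ⬝ᵥ w = y ⬝ᵥ y := by
    rw [cross_dot_cross, hu, dotProduct_comm y u, hy]; ring
  have hxw : x ⨯₃ w = (x ⬝ᵥ y) • u := by
    rw [cross_cross_eq_smul_sub_smul', hx, zero_smul, sub_zero]
  have hwu : w ⨯₃ u = y := by
    rw [cross_cross_eq_smul_sub_smul, hu, dotProduct_comm y u, hy]; simp
  have htriple := cross_cross_eq_smul_sub_smul' w x w
  rw [hxw, map_smul, hwu, hww, dotProduct_comm x w, dotProduct_comm x y] at htriple
  rw [htriple]; abel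

theorem exists_rodriguesRotation_eq (hu : u ⬝ᵥ u = 1) {a b : Fin 3 → ℝ} (ha : a ⬝ᵥ a = 1)
    (hb : b ⬝ᵥ b = 1) (hab : u ⬝ᵥ a = u ⬝ᵥ b) :
    ∃ θ ∈ Icc 0 (2 * π), rodriguesRotation u θ a = b := by
  set d := u ⬝ᵥ a
  set a' := a - d • u
  set b' := b - d • u
  have ha' : u ⬝ᵥ a' = 0 := by simp [a', dotProduct_sub, hu, d]
  have hb' : u ⬝ᵥ b' = 0 := by simp [b', dotProduct_sub, hu, hab]
  have hnorm_a' : a' ⬝ᵥ a' = 1 - d ^ 2 := by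
    simp only [a', sub_dotProduct, dotProduct_sub, dotProduct_smul, smul_dotProduct, ha, hu,
      dotProduct_comm a u, smul_eq_mul]; ring
  have hnorm_b' : b' ⬝ᵥ b' = 1 - d ^ 2 := by
    simp only [b', sub_dotProduct, dotProduct_sub, dotProduct_smul, smul_dotProduct, hb, hu,
      dotProduct_comm b u, ← hab, smul_eq_mul]; ring
  have hrot (θ : ℝ) : rodriguesRotation u θ a = d • u + cos θ • a' + sin θ • (u ⨯₃ a') := by
    simp only [rodriguesRotation, a', map_sub, map_smul, cross_self, smul_zero, sub_zero]
    module
  by_cases hd : 1 - d ^ 2 = 0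
  · have hab_eq : a = b := by
      rw [hd, dotProduct_self_eq_zero, sub_eq_zero] at hnorm_a' hnorm_b'
      rw [hnorm_a', hnorm_b']
    exact ⟨0, ⟨le_rfl, by positivity⟩, by simp [rodriguesRotation, hab_eq]⟩
  have hdecomp := dotProduct_self_smul_eq_of_dotProduct_eq_zero hu hb' ha'
  set w := u ⨯₃ a'
  rw [hnorm_a'] at hdecomp
  have hcs : ((a' ⬝ᵥ b') / (1 - d ^ 2)) ^ 2 + ((w ⬝ᵥ b') / (1 - d ^ 2)) ^ 2 = 1 := by
    have := congrArg (· ⬝ᵥ b') hdecomp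
    simp only [smul_dotProduct, add_dotProduct, hnorm_b', smul_eq_mul] at this
    field_simp
    linear_combination -this
  obtain ⟨θ, hθ, hcos, hsin⟩ := exists_mem_Icc_cos_sin_eq hcs
  refine ⟨θ, hθ, ?_⟩
  rw [hrot, hcos, hsin, add_assoc, div_eq_inv_mul, div_eq_inv_mul, mul_smul, mul_smul,
    ← smul_add, ← hdecomp, inv_smul_smul₀ hd]
  simp [b']

end Rotation

theorem exp_I_mul_smul_of_mul_self_eq_one {𝔸 : Type*} [Ring 𝔸] [Algebra ℂ 𝔸]
    [TopologicalSpace 𝔸] [IsTopologicalRing 𝔸] [ContinuousSMul ℂ 𝔸] [T2Space 𝔸] {A : 𝔸}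
    (hA : A * A = 1) (z : ℂ) :
    NormedSpace.exp ((Complex.I * z) • A) =
      Complex.cos z • 1 + (Complex.I * Complex.sin z) • A := by
  have hpow_even (k : ℕ) : A ^ (2 * k) = 1 := by rw [pow_mul, sq, hA, one_pow]
  have hI_even (k : ℕ) : (Complex.I * z) ^ (2 * k) = (-1) ^ k * z ^ (2 * k) := by
    rw [mul_pow, pow_mul, Complex.I_sq]
  have heven : HasSum (fun k : ℕ => ((2 * k).factorial : ℂ)⁻¹ • ((Complex.I * z) • A) ^ (2 * k))
      (Complex.cos z • 1) := by
    refine ((Complex.hasSum_cos z).smul_const (1 : 𝔸)).congr_fun fun k => ?_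
    rw [smul_pow, hpow_even, smul_smul, hI_even, div_eq_inv_mul, mul_comm]
  have hodd : HasSum
      (fun k : ℕ => ((2 * k + 1).factorial : ℂ)⁻¹ • ((Complex.I * z) • A) ^ (2 * k + 1))
      ((Complex.I * Complex.sin z) • A) := by
    refine (((Complex.hasSum_sin z).mul_left Complex.I).smul_const A).congr_fun fun k => ?_
    rw [smul_pow, pow_succ A, hpow_even, one_mul, smul_smul, pow_succ, hI_even]
    ring_nf
  rw [NormedSpace.exp_eq_tsum ℂ]
  exact HasSum.tsum_eq (HasSum.even_add_odd heven hodd)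

section Pauli

open Complex

theorem pauliDot_smul (r : ℝ) (v : Fin 3 → ℝ) : pauliDot (r • v) = (r : ℂ) • pauliDot v := by
  ext i j
  fin_cases i <;> fin_cases j <;> simp [pauliDot] <;> ring

theorem pauliDot_mul_self_s17 (u : Fin 3 → ℝ) :
    pauliDot u * pauliDot u = ((u ⬝ᵥ u : ℝ) : ℂ) • 1 := by
  ext i j
  fin_cases i <;> fin_cases j <;>
    simp [pauliDot, mul_apply, vec3_dotProduct] <;> ring_nf <;> simp [I_sq]

theorem pauliDot_conj (u a : Fin 3 → ℝ) (c s : ℝ) :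
    ((c : ℂ) • 1 - (I * s) • pauliDot u) * pauliDot a * ((c : ℂ) • 1 + (I * s) • pauliDot u) =
      pauliDot ((c ^ 2 - s ^ 2 * (u ⬝ᵥ u)) • a + (2 * c * s) • (u ⨯₃ a) +
        (2 * s ^ 2 * (u ⬝ᵥ a)) • u) := by
  ext i j
  fin_cases i <;> fin_cases j <;>
    simp only [pauliDot, Pi.add_apply, Pi.smul_apply, smul_eq_mul, cross_apply,
      vec3_dotProduct] <;>
    simp [mul_apply] <;> ring_nf <;> simp [I_sq] <;> ring

variable {u : Fin 3 → ℝ}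

theorem exp_smul_pauliDot (hu : u ⬝ᵥ u = 1) (φ : ℝ) :
    NormedSpace.exp ((I * φ) • pauliDot u) =
      (Real.cos φ : ℂ) • 1 + (I * Real.sin φ) • pauliDot u := by
  have hU : pauliDot u * pauliDot u = 1 := by rw [pauliDot_mul_self_s17, hu]; simp
  rw [exp_I_mul_smul_of_mul_self_eq_one hU, ofReal_cos, ofReal_sin]

theorem exp_smul_pauliDot_conj (hu : u ⬝ᵥ u = 1) (θ : ℝ) (a : Fin 3 → ℝ) :
    NormedSpace.exp (-((I * (θ / 2 : ℝ)) • pauliDot u)) * pauliDot a *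
      NormedSpace.exp ((I * (θ / 2 : ℝ)) • pauliDot u) = pauliDot (rodriguesRotation u θ a) := by
  have hrot : rodriguesRotation u θ a =
      (Real.cos (θ / 2) ^ 2 - Real.sin (θ / 2) ^ 2 * (u ⬝ᵥ u)) • a +
        (2 * Real.cos (θ / 2) * Real.sin (θ / 2)) • (u ⨯₃ a) +
        (2 * Real.sin (θ / 2) ^ 2 * (u ⬝ᵥ a)) • u := by
    have hθ : θ = 2 * (θ / 2) := by ring
    rw [rodriguesRotation, hu, mul_one, hθ, Real.cos_two_mul', Real.sin_two_mul, ← hθ,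
      ← Real.cos_sq_add_sin_sq (θ / 2)]
    ring_nf
  have hneg : -((I * (θ / 2 : ℝ)) • pauliDot u) = (I * (-(θ / 2) : ℝ)) • pauliDot u := by
    rw [ofReal_neg, mul_neg, neg_smul]
  rw [hneg, exp_smul_pauliDot hu, exp_smul_pauliDot hu, Real.cos_neg, Real.sin_neg, ofReal_neg,
    mul_neg, neg_smul, ← sub_eq_add_neg, pauliDot_conj, hrot]

theorem exp_smul_pauliDot_conj_projection (hu : u ⬝ᵥ u = 1) (θ : ℝ) (a : Fin 3 → ℝ) :
    NormedSpace.exp (-((I * (θ / 2 : ℝ)) • pauliDot u)) * ((2 : ℂ)⁻¹ • (1 - pauliDot a)) *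
      NormedSpace.exp ((I * (θ / 2 : ℝ)) • pauliDot u) =
      (2 : ℂ)⁻¹ • (1 - pauliDot (rodriguesRotation u θ a)) := by
  set X := (I * (θ / 2 : ℝ)) • pauliDot u
  have hinv : NormedSpace.exp (-X) * NormedSpace.exp X = 1 := by
    rw [← Matrix.exp_add_of_commute _ _ (Commute.refl X).neg_left, neg_add_cancel,
      NormedSpace.exp_zero]
  rw [mul_smul_comm, smul_mul_assoc, mul_sub, sub_mul, mul_one, hinv, exp_smul_pauliDot_conj hu]

end Pauli

theorem precession_maps_endpoint_projections_general
    (g : ℝ → Fin 3 → ℝ) (g0 : ℝ) (hg0 : 0 < g0)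
    (gnorm : ℝ → ℝ) (hgnorm : ∀ q, gnorm q = Real.sqrt (∑ i, g q i ^ 2))
    (hgap : ∀ q, g0 ≤ gnorm q)
    (n : ℝ → Fin 3 → ℝ) (hn : ∀ q, n q = (gnorm q)⁻¹ • g q)
    (qm qp qs : ℝ)
    (hplane : ∑ i, n qs i * (n qp i - n qm i) = 0)
    (H : Matrix (Fin 2) (Fin 2) ℂ) (hH : H = (2 : ℂ)⁻¹ • pauliDot (g qs))
    (Pm : ℝ → Matrix (Fin 2) (Fin 2) ℂ)
    (hPm : ∀ q, Pm q = (2 : ℂ)⁻¹ • (1 - pauliDot (n q))) :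
    ∃ τ : ℝ, 0 ≤ τ ∧ τ ≤ 2 * Real.pi / gnorm qs ∧
      NormedSpace.exp ((-(Complex.I * τ)) • H) * Pm qm *
        NormedSpace.exp ((Complex.I * τ) • H) = Pm qp := by
  have hpos q : 0 < gnorm q := hg0.trans_le (hgap q)
  have hunit q : n q ⬝ᵥ n q = 1 := by
    rw [hn, hgnorm]; exact dotProduct_self_inv_sqrt_smul (hgnorm q ▸ hpos q)
  have hequidistant : n qs ⬝ᵥ n qm = n qs ⬝ᵥ n qp :=
    (sub_eq_zero.mp ((dotProduct_sub _ _ _).symm.trans hplane)).symm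
  obtain ⟨θ, ⟨hθ0, hθ2π⟩, hθ⟩ :=
    exists_rodriguesRotation_eq (hunit qs) (hunit qm) (hunit qp) hequidistant
  refine ⟨θ / gnorm qs, div_nonneg hθ0 (hpos qs).le,
    div_le_div_of_nonneg_right hθ2π (hpos qs).le, ?_⟩
  have htime : (Complex.I * (θ / gnorm qs : ℝ)) • H =
      (Complex.I * (θ / 2 : ℝ)) • pauliDot (n qs) := by
    have hg : g qs = gnorm qs • n qs := by rw [hn, smul_inv_smul₀ (hpos qs).ne']
    have hgC : (gnorm qs : ℂ) ≠ 0 := Complex.ofReal_ne_zero.mpr (hpos qs).ne'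
    rw [hH, hg, pauliDot_smul, smul_smul, smul_smul]
    congr 1
    push_cast
    field_simp
  rw [neg_smul, htime, hPm, hPm, exp_smul_pauliDot_conj_projection (hunit qs), hθ]

/-- For a 2-level Hamiltonian `2H(q) = g(q)·σ` with `|g(q)| ≥ g₀ > 0` on
`[q₋, q₊]`, if `ĝ(q*)` is equidistant from the endpoints `ĝ(q₋)`, `ĝ(q₊)` (i.e. it lies on the
plane orthogonal to `ĝ(q₊) - ĝ(q₋)`: `ĝ(q*)·(ĝ(q₊) - ĝ(q₋)) = 0`), then for a suitable time
`τ ≤ 2π/|g(q*)|` the unitary `e^{-i H(q*) τ}` maps the eigenprojection `P₋(q₋)` to `P₋(q₊)`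
by conjugation. -/
theorem precession_maps_endpoint_projections
    (g : ℝ → Fin 3 → ℝ) (g0 : ℝ) (hg0 : 0 < g0)
    (gnorm : ℝ → ℝ) (hgnorm : ∀ q, gnorm q = Real.sqrt (∑ i, g q i ^ 2))
    (hgap : ∀ q, g0 ≤ gnorm q)
    (n : ℝ → Fin 3 → ℝ) (hn : ∀ q, n q = (gnorm q)⁻¹ • g q)
    (qm qp qs : ℝ) (hq : qm ≤ qp) (hqs : qs ∈ Set.Icc qm qp)
    (hplane : ∑ i, n qs i * (n qp i - n qm i) = 0)
    (H : Matrix (Fin 2) (Fin 2) ℂ) (hH : H = (2 : ℂ)⁻¹ • pauliDot (g qs))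
    (Pm : ℝ → Matrix (Fin 2) (Fin 2) ℂ)
    (hPm : ∀ q, Pm q = (2 : ℂ)⁻¹ • (1 - pauliDot (n q))) :
    ∃ τ : ℝ, 0 ≤ τ ∧ τ ≤ 2 * Real.pi / gnorm qs ∧
      NormedSpace.exp ((-(Complex.I * τ)) • H) * Pm qm *
        NormedSpace.exp ((Complex.I * τ) • H) = Pm qp :=
  precession_maps_endpoint_projections_general g g0 hg0 gnorm hgnorm hgap n hn qm qp qs hplane H hH
    Pm hPm
end

section
/- For the Grover search problem with minimal gap g_0 = 1/√N, if the dephasing rate satisfies γ = c g_0 for a constant c > 0, then the optimal time scale τ = (∫_0^1 √M(q) dq)^2 with M(q) = (γ/4)|ĝ'(q)|^2/(g(q)^2 + γ^2), |ĝ'(q)| = √(1/N - 1/N^2) · 2/g(q)^2, and g(q)^2 = 4(1-q)q/N + (1-2q)^2, satisfies τ = O(√N) as N → ∞ (i.e., τ is bounded above by C√N for a constant C depending only on c). -/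
/-!
Since `γ² ≤ g² + γ²`, the mass is at most `|ĝ'|² / (4γ) ≤ 1 / (c √N g⁴)`, so
`√M ≤ (c √N)^(-1/2) / g²`. For `N ≥ 2` the gap satisfies `g² ≥ 1/N + (1 - 2q)²/2`, a Lorentzian
profile whose integral over `[0, 1]` is an arctangent difference, at most `π √(N/2)`.
Squaring gives `τ ≤ π² √N / (2c)`.
-/

/-- Grover gap squared: `g(q)² = 4(1-q)q/N + (1-2q)²`. -/
noncomputable def groverGapSq (N q : ℝ) : ℝ := 4 * (1 - q) * q / N + (1 - 2 * q) ^ 2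

/-- Squared Bloch-sphere velocity: `|ĝ'(q)|² = (1/N - 1/N²) · 4 / g(q)⁴`. -/
noncomputable def groverVelSq (N q : ℝ) : ℝ := (1 / N - 1 / N ^ 2) * 4 / (groverGapSq N q) ^ 2

/-- The mass `M(q) = (γ/4) |ĝ'(q)|² / (g(q)² + γ²)` with dephasing rate `γ = c/√N`. -/
noncomputable def groverMass (c N q : ℝ) : ℝ :=
  (c / Real.sqrt N) / 4 * groverVelSq N q / (groverGapSq N q + (c / Real.sqrt N) ^ 2)

open Real

theorem integral_inv_add_mul_sq_le {a b : ℝ} (ha : 0 < a) (hb : 0 < b) (s t : ℝ) :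
    ∫ x in s..t, (a + b * x ^ 2)⁻¹ ≤ π / √(a * b) := by
  set k := √(b / a) with hk
  have hk0 : 0 < k := sqrt_pos.mpr (div_pos hb ha)
  have hscale : ∀ x : ℝ, (a + b * x ^ 2)⁻¹ = a⁻¹ * (1 + (k * x) ^ 2)⁻¹ := fun x => by
    rw [mul_pow, hk, sq_sqrt (div_pos hb ha).le]
    field_simp
  have hak : a * k = √(a * b) := by
    have : a * b = a ^ 2 * (b / a) := by field_simp
    rw [this, sqrt_mul (sq_nonneg a), sqrt_sq ha.le]
  have harctan : arctan (k * t) - arctan (k * s) ≤ π := by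
    linarith [neg_pi_div_two_lt_arctan (k * s), arctan_lt_pi_div_two (k * t)]
  calc ∫ x in s..t, (a + b * x ^ 2)⁻¹
      = a⁻¹ * k⁻¹ * (arctan (k * t) - arctan (k * s)) := by
        simp only [hscale, intervalIntegral.integral_const_mul,
          intervalIntegral.integral_comp_mul_left (fun x => (1 + x ^ 2)⁻¹) hk0.ne',
          integral_inv_one_add_sq, smul_eq_mul, mul_assoc]
    _ ≤ a⁻¹ * k⁻¹ * π := by gcongr
    _ = π / √(a * b) := by rw [← hak]; field_simp

theorem integral_inv_add_mul_sq_one_sub_two_mul_le {a b : ℝ} (ha : 0 < a) (hb : 0 < b) :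
    ∫ q in (0 : ℝ)..1, (a + b * (1 - 2 * q) ^ 2)⁻¹ ≤ π / (2 * √(a * b)) := by
  rw [intervalIntegral.integral_comp_sub_mul (fun x => (a + b * x ^ 2)⁻¹) two_ne_zero,
    smul_eq_mul, div_mul_eq_div_div_swap, div_eq_inv_mul _ 2]
  gcongr
  exact integral_inv_add_mul_sq_le ha hb _ _

theorem groverGapSq_eq {N : ℝ} (hN : N ≠ 0) (q : ℝ) :
    groverGapSq N q = 1 / N + (1 - 1 / N) * (1 - 2 * q) ^ 2 := by
  unfold groverGapSq; field_simp; ring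

theorem groverGapSq_nonneg {N : ℝ} (hN : 1 ≤ N) (q : ℝ) : 0 ≤ groverGapSq N q := by
  have hinv_le_one : 1 / N ≤ 1 := (div_le_one (by linarith)).2 hN
  rw [groverGapSq_eq (by positivity) q]
  positivity

theorem groverMass_le {c N : ℝ} (hc : 0 < c) (hN : 1 ≤ N) (q : ℝ) :
    groverMass c N q ≤ (c * √N)⁻¹ * (groverGapSq N q ^ 2)⁻¹ := by
  have hN0 : 0 < N := by linarith
  have hNsq : 1 / N ^ 2 ≤ 1 / N := by
    gcongr; nlinarith
  have hG := groverGapSq_nonneg hN q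
  have hVel_nonneg : 0 ≤ groverVelSq N q := by
    unfold groverVelSq; have := sub_nonneg.2 hNsq; positivity
  have hVel_le : groverVelSq N q ≤ 1 / N * 4 / groverGapSq N q ^ 2 := by
    unfold groverVelSq; gcongr; linarith [one_div_nonneg.2 (sq_nonneg N)]
  set γ := c / √N with hγ_def
  unfold groverMass
  calc γ / 4 * groverVelSq N q / (groverGapSq N q + γ ^ 2)
      ≤ γ / 4 * groverVelSq N q / γ ^ 2 := by
        gcongr; exact le_add_of_nonneg_left hG
    _ ≤ γ / 4 * (1 / N * 4 / groverGapSq N q ^ 2) / γ ^ 2 := by gcongr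
    _ = (c * √N)⁻¹ * (groverGapSq N q ^ 2)⁻¹ := by
        rw [hγ_def]
        field_simp
        rw [sq_sqrt hN0.le]

theorem one_div_add_sq_div_two_le_groverGapSq {N : ℝ} (hN : 2 ≤ N) (q : ℝ) :
    1 / N + 1 / 2 * (1 - 2 * q) ^ 2 ≤ groverGapSq N q := by
  have : 1 / N ≤ 1 / 2 := by gcongr
  rw [groverGapSq_eq (by positivity) q]
  nlinarith [sq_nonneg (1 - 2 * q)]

theorem sqrt_groverMass_le {c N : ℝ} (hc : 0 < c) (hN : 2 ≤ N) (q : ℝ) :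
    √(groverMass c N q) ≤ (√(c * √N))⁻¹ * (1 / N + 1 / 2 * (1 - 2 * q) ^ 2)⁻¹ := by
  calc √(groverMass c N q) ≤ √((c * √N)⁻¹ * (groverGapSq N q ^ 2)⁻¹) :=
        sqrt_le_sqrt (groverMass_le hc (by linarith) q)
    _ = (√(c * √N))⁻¹ * (groverGapSq N q)⁻¹ := by
        rw [sqrt_mul (by positivity), sqrt_inv, sqrt_inv,
          sqrt_sq (groverGapSq_nonneg (by linarith) q)]
    _ ≤ (√(c * √N))⁻¹ * (1 / N + 1 / 2 * (1 - 2 * q) ^ 2)⁻¹ := by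
        gcongr
        exact one_div_add_sq_div_two_le_groverGapSq hN q

theorem integral_sqrt_groverMass_le {c N : ℝ} (hc : 0 < c) (hN : 2 ≤ N) :
    ∫ q in (0 : ℝ)..1, √(groverMass c N q)
      ≤ (√(c * √N))⁻¹ * (π / (2 * √(1 / N * (1 / 2)))) := by
  have hbound_cont : Continuous fun q : ℝ =>
      (√(c * √N))⁻¹ * (1 / N + 1 / 2 * (1 - 2 * q) ^ 2)⁻¹ :=
    continuous_const.mul (Continuous.inv₀ (by fun_prop) fun q => by positivity)
  calc ∫ q in (0 : ℝ)..1, √(groverMass c N q)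
      ≤ ∫ q in (0 : ℝ)..1, (√(c * √N))⁻¹ * (1 / N + 1 / 2 * (1 - 2 * q) ^ 2)⁻¹ := by
        rw [intervalIntegral.integral_of_le zero_le_one, intervalIntegral.integral_of_le zero_le_one]
        exact MeasureTheory.integral_mono_of_nonneg (.of_forall fun q => sqrt_nonneg _)
          (hbound_cont.intervalIntegrable 0 1).1 (.of_forall (sqrt_groverMass_le hc hN))
    _ = (√(c * √N))⁻¹ * ∫ q in (0 : ℝ)..1, (1 / N + 1 / 2 * (1 - 2 * q) ^ 2)⁻¹ :=
        intervalIntegral.integral_const_mul _ _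
    _ ≤ (√(c * √N))⁻¹ * (π / (2 * √(1 / N * (1 / 2)))) := by
        gcongr
        exact integral_inv_add_mul_sq_one_sub_two_mul_le (by positivity) (by norm_num)

/-- For the Grover search problem with minimal gap `g₀ = 1/√N` and dephasing rate
`γ = c g₀`, the optimal time scale `τ(N) = (∫_0^1 √(M(q)) dq)²` satisfies `τ = O(√N)` as
`N → ∞`: there is a constant `C` (depending only on `c`) with `τ(N) ≤ C √N` for all `N ≥ 2`. -/
theorem grover_optimal_time_scale (c : ℝ) (hc : 0 < c) :
    ∃ C : ℝ, 0 < C ∧ ∀ N : ℝ, 2 ≤ N →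
      (∫ q in (0:ℝ)..1, Real.sqrt (groverMass c N q)) ^ 2 ≤ C * Real.sqrt N := by
  refine ⟨π ^ 2 / (2 * c), by positivity, fun N hN => ?_⟩
  have hN0 : 0 < N := by linarith
  calc (∫ q in (0:ℝ)..1, √(groverMass c N q)) ^ 2
      ≤ ((√(c * √N))⁻¹ * (π / (2 * √(1 / N * (1 / 2))))) ^ 2 :=
        pow_le_pow_left₀ (intervalIntegral.integral_nonneg zero_le_one fun _ _ => sqrt_nonneg _)
          (integral_sqrt_groverMass_le hc hN) 2
    _ = π ^ 2 / (2 * c) * √N := by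
        rw [mul_pow, div_pow, mul_pow, inv_pow, sq_sqrt (by positivity), sq_sqrt (by positivity)]
        field_simp
        rw [sq_sqrt hN0.le]
end
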